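/- Equality in Jensen's inequality for the strictly convex function φ(x) = x log x: if ∫ q φ(p/q) dμ = 0 where q dμ is a probability measure and ∫ p dμ = 1 with p ≥ 0 absolutely continuous with respect to q, then p = q μ-almost everywhere. Consequently the Gibbs density is the unique minimizer of the free energy functional. -/

import Mathlib

/-!
With `klFun t = t log t + 1 - t ≥ 0`, vanishing only at `t = 1`, we have pointwise
`q φ(p/q) = q klFun(p/q) + (p - q)` where `q ≠ 0`. Since `∫ p = ∫ q`, the hypothesis says that
the nonnegative function `q klFun(p/q)` has integral zero, so it vanishes a.e., forcing `p/q = 1` a.e.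
-/

open MeasureTheory InformationTheory

lemma mul_klFun_div {a b : ℝ} (hb : b ≠ 0) :
    b * klFun (a / b) = b * (a / b * Real.log (a / b)) - (a - b) := by
  rw [klFun_apply]
  field_simp
  ring

lemma eq_of_mul_klFun_div_eq_zero {a b : ℝ} (ha : 0 ≤ a) (hb : 0 < b)
    (h : b * klFun (a / b) = 0) : a = b := by
  have hkl : klFun (a / b) = 0 := (mul_eq_zero.mp h).resolve_left hb.ne'
  exact (div_eq_one_iff_eq hb.ne').mp ((klFun_eq_zero_iff (div_nonneg ha hb.le)).mp hkl)

section

variable {X : Type*} [MeasurableSpace X] {μ : Measure X} {p q : X → ℝ}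

lemma integrable_mul_klFun_div_of_integrable (hq0 : ∀ᵐ x ∂μ, q x ≠ 0)
    (hp : Integrable p μ) (hq : Integrable q μ)
    (hInt : Integrable (fun x => q x * ((p x / q x) * Real.log (p x / q x))) μ) :
    Integrable (fun x => q x * klFun (p x / q x)) μ := by
  refine (hInt.sub (hp.sub hq)).congr ?_
  filter_upwards [hq0] with x hx
  exact (mul_klFun_div hx).symm

lemma integral_mul_klFun_div (hq0 : ∀ᵐ x ∂μ, q x ≠ 0)
    (hp : Integrable p μ) (hq : Integrable q μ)
    (hInt : Integrable (fun x => q x * ((p x / q x) * Real.log (p x / q x))) μ) :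
    ∫ x, q x * klFun (p x / q x) ∂μ =
      ∫ x, q x * ((p x / q x) * Real.log (p x / q x)) ∂μ - (∫ x, p x ∂μ - ∫ x, q x ∂μ) := by
  have hpq : Integrable (fun x => p x - q x) μ := hp.sub hq
  rw [← integral_sub hp hq, ← integral_sub hInt hpq]
  refine integral_congr_ae ?_
  filter_upwards [hq0] with x hx
  exact mul_klFun_div hx

lemma ae_eq_of_integral_mul_klFun_div_eq_zero (hq0 : ∀ᵐ x ∂μ, 0 < q x)
    (hp0 : ∀ᵐ x ∂μ, 0 ≤ p x) (hInt : Integrable (fun x => q x * klFun (p x / q x)) μ)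
    (h0 : ∫ x, q x * klFun (p x / q x) ∂μ = 0) :
    p =ᵐ[μ] q := by
  have hnonneg : 0 ≤ᵐ[μ] fun x => q x * klFun (p x / q x) := by
    filter_upwards [hq0, hp0] with x hqx hpx
    exact mul_nonneg hqx.le (klFun_nonneg (div_nonneg hpx hqx.le))
  filter_upwards [hq0, hp0, (integral_eq_zero_iff_of_nonneg_ae hnonneg hInt).mp h0]
    with x hqx hpx hx
  exact eq_of_mul_klFun_div_eq_zero hpx hqx hx

end

theorem jensen_equality_x_log_x_general {X : Type*} [MeasurableSpace X]
    (μ : Measure X)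
    (p q : X → ℝ)
    (hq0 : ∀ᵐ x ∂μ, 0 < q x) (hq1 : ∫ x, q x ∂μ = 1)
    (hp0 : ∀ x, 0 ≤ p x) (hp1 : ∫ x, p x ∂μ = 1)
    (hInt : Integrable (fun x => q x * ((p x / q x) * Real.log (p x / q x))) μ)
    (h0 : ∫ x, q x * ((p x / q x) * Real.log (p x / q x)) ∂μ = 0) :
    p =ᵐ[μ] q := by
  have hp : Integrable p μ := Integrable.of_integral_ne_zero (by simp [hp1])
  have hq : Integrable q μ := Integrable.of_integral_ne_zero (by simp [hq1])
  have hq_ne : ∀ᵐ x ∂μ, q x ≠ 0 := hq0.mono fun x hx => hx.ne'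
  refine ae_eq_of_integral_mul_klFun_div_eq_zero hq0 (.of_forall hp0)
    (integrable_mul_klFun_div_of_integrable hq_ne hp hq hInt) ?_
  rw [integral_mul_klFun_div hq_ne hp hq hInt, h0, hp1, hq1]
  ring

/-- Equality in Jensen's inequality for the strictly convex `φ(x) = x log x`:
if `q > 0` a.e. with `∫ q dμ = 1`, `p ≥ 0` with `∫ p dμ = 1`, and the relative entropy
`∫ q φ(p/q) dμ` vanishes, then `p = q` μ-a.e. (hence the Gibbs density is the unique
minimizer of the free energy). -/
theorem jensen_equality_x_log_x {X : Type*} [MeasurableSpace X]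
    (μ : Measure X) [IsProbabilityMeasure μ]
    (p q : X → ℝ) (hpm : Measurable p) (hqm : Measurable q)
    (hq0 : ∀ᵐ x ∂μ, 0 < q x) (hq1 : ∫ x, q x ∂μ = 1)
    (hp0 : ∀ x, 0 ≤ p x) (hp1 : ∫ x, p x ∂μ = 1)
    (hInt : Integrable (fun x => q x * ((p x / q x) * Real.log (p x / q x))) μ)
    (h0 : ∫ x, q x * ((p x / q x) * Real.log (p x / q x)) ∂μ = 0) :
    p =ᵐ[μ] q :=
  jensen_equality_x_log_x_general μ p q hq0 hq1 hp0 hp1 hInt h0
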